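/- arXiv:1511.06813 — 2 statements merged into one kernel-verified Lean document; each statement's English description precedes it below -/
import Mathlib

section
/- If a CADMG G' is reachable from a CADMG G and G' has random vertex set C, then G' = G[C]; that is, G' has fixed vertex set pa_G(C) \ C, its bidirected edges are exactly the bidirected edges of G with both endpoints in C, and its directed edges are exactly the directed edges of G pointing to a vertex of C. -/
open Classical

noncomputable section

/-- A conditional acyclic directed mixed graph (CADMG): disjoint sets of random
vertices `V` and fixed vertices `W`, directed edges into `V` with no loops or
directed cycles, symmetric bidirected edges between distinct random vertices,
and every fixed vertex has at least one child. -/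
structure CADMG (α : Type) where
  V : Set α
  W : Set α
  dir : Set (α × α)
  bi : Set (α × α)
  disjointVW : Disjoint V W
  dir_mem : ∀ e ∈ dir, e.1 ∈ V ∪ W ∧ e.2 ∈ V
  dir_irrefl : ∀ e ∈ dir, e.1 ≠ e.2
  acyclic : ∀ a b : α, Relation.ReflTransGen (fun x y => (x, y) ∈ dir) a b →
      Relation.ReflTransGen (fun x y => (x, y) ∈ dir) b a → a = b
  bi_symm : ∀ a b : α, (a, b) ∈ bi → (b, a) ∈ bi
  bi_mem : ∀ e ∈ bi, e.1 ∈ V ∧ e.2 ∈ V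
  bi_irrefl : ∀ e ∈ bi, e.1 ≠ e.2
  fixed_child : ∀ w ∈ W, ∃ v, (w, v) ∈ dir

namespace CADMG

variable {α : Type}

/-- The parents of a vertex. -/
def pa (G : CADMG α) (b : α) : Set α := {a | (a, b) ∈ G.dir}

/-- The parents of a set of vertices. -/
def paSet (G : CADMG α) (A : Set α) : Set α := {a | ∃ b ∈ A, (a, b) ∈ G.dir}

/-- The ancestors of a set of vertices (every vertex is its own ancestor). -/
def anc (G : CADMG α) (A : Set α) : Set α :=
  {w | ∃ v ∈ A, Relation.ReflTransGen (fun x y => (x, y) ∈ G.dir) w v}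

/-- An ancestral set contains all of its own ancestors. -/
def Ancestral (G : CADMG α) (A : Set α) : Prop := G.anc A = A

/-- A random-ancestral set: a set of random vertices all of whose ancestors are
in the set itself or fixed. -/
def RandomAncestral (G : CADMG α) (A : Set α) : Prop :=
  A ⊆ G.V ∧ G.anc A ⊆ A ∪ G.W

/-- The sterile subset of `C`: those members of `C` that are not parents of `C`. -/
def sterile (G : CADMG α) (C : Set α) : Set α := C \ G.paSet C

/-- A bidirected-connected set of random vertices: every two members are joined by
a path of bidirected edges with all intermediate vertices inside the set. -/
def BiConn (G : CADMG α) (B : Set α) : Prop :=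
  B ⊆ G.V ∧ ∀ a ∈ B, ∀ b ∈ B,
    Relation.ReflTransGen (fun x y => (x, y) ∈ G.bi ∧ x ∈ B ∧ y ∈ B) a b

/-- A district: a maximal bidirected-connected set of random vertices. -/
def IsDistrict (G : CADMG α) (D : Set α) : Prop :=
  D.Nonempty ∧ G.BiConn D ∧ ∀ D', G.BiConn D' → D ⊆ D' → D' = D

/-- `dis G B`: the union of the districts of `G` meeting `B`. -/
def dis (G : CADMG α) (B : Set α) : Set α :=
  ⋃₀ {D | G.IsDistrict D ∧ (D ∩ B).Nonempty}

/-- The induced graph `G[C]`: random vertices `C`, fixed vertices `pa_G(C) \ C`,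
the bidirected edges of `G` within `C` and the directed edges of `G` pointing
into `C`. -/
def induce (G : CADMG α) (C : Set α) : CADMG α where
  V := C ∩ G.V
  W := G.paSet (C ∩ G.V) \ (C ∩ G.V)
  dir := {e | e ∈ G.dir ∧ e.2 ∈ C ∩ G.V}
  bi := {e | e ∈ G.bi ∧ e.1 ∈ C ∩ G.V ∧ e.2 ∈ C ∩ G.V}
  disjointVW := by
    rw [Set.disjoint_left]; rintro a ha ⟨-, h⟩; exact h ha
  dir_mem := by
    rintro e ⟨he, h2⟩
    refine ⟨?_, h2⟩
    by_cases h1 : e.1 ∈ C ∩ G.V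
    · exact Or.inl h1
    · exact Or.inr ⟨⟨e.2, h2, he⟩, h1⟩
  dir_irrefl := fun e he => G.dir_irrefl e he.1
  acyclic := fun a b h1 h2 =>
    G.acyclic a b (h1.lift id fun x y h => h.1) (h2.lift id fun x y h => h.1)
  bi_symm := fun a b h => ⟨G.bi_symm a b h.1, h.2.2, h.2.1⟩
  bi_mem := fun e he => ⟨he.2.1, he.2.2⟩
  bi_irrefl := fun e he => G.bi_irrefl e he.1
  fixed_child := by
    rintro w ⟨⟨b, hb, hwb⟩, -⟩
    exact ⟨b, hwb, hb⟩

/-- A CADMG `G'` is reachable from `G` if it is obtained by iteratively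
restricting to a district (`𝔡`) or to a random-ancestral set (`𝔪`). -/
inductive Reach : CADMG α → CADMG α → Prop where
  | refl (G : CADMG α) : Reach G G
  | district {G₁ G₂ : CADMG α} {D : Set α} :
      Reach G₁ G₂ → G₂.IsDistrict D → Reach G₁ (G₂.induce D)
  | margin {G₁ G₂ : CADMG α} {A : Set α} :
      Reach G₁ G₂ → G₂.RandomAncestral A → Reach G₁ (G₂.induce A)

/-- `G₁` is a subgraph of `G₂`. -/
def Subgraph (G₁ G₂ : CADMG α) : Prop :=
  G₁.V ⊆ G₂.V ∧ G₁.W ⊆ G₂.W ∧ G₁.dir ⊆ G₂.dir ∧ G₁.bi ⊆ G₂.bi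

/-- An intrinsic set: a nonempty bidirected-connected set `S` of random vertices
such that `G[S]` is reachable from `G`. -/
def Intrinsic (G : CADMG α) (S : Set α) : Prop :=
  S.Nonempty ∧ G.BiConn S ∧ Reach G (G.induce S)

/-- The recursive heads of `G`: sterile subsets of intrinsic sets. -/
def heads (G : CADMG α) : Set (Set α) :=
  {H | ∃ S, G.Intrinsic S ∧ G.sterile S = H}

/-- The (unique) intrinsic set whose recursive head is `H`. -/
def intrinsicOf (G : CADMG α) (H : Set α) : Set α :=
  ⋃₀ {S | G.Intrinsic S ∧ G.sterile S = H}

/-- The partial order on recursive heads: `H₁ ≺ H₂` iff the intrinsic set of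
`H₁` is strictly contained in that of `H₂`. -/
def headLT (G : CADMG α) (H₁ H₂ : Set α) : Prop :=
  G.intrinsicOf H₁ ⊂ G.intrinsicOf H₂

/-- The tail of a recursive head: the parents of its intrinsic set. -/
def tail (G : CADMG α) (H : Set α) : Set α := G.paSet (G.intrinsicOf H)

/-- One step of the intrinsic-closure iteration: restrict to the ancestors of
`B`, then to the districts meeting `B`. -/
def closureStep (B : Set α) (G : CADMG α) : CADMG α :=
  (G.induce (G.anc B)).induce ((G.induce (G.anc B)).dis B)

/-- The intrinsic closure `I_G(B)`: the random vertex set of the stable graph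
obtained by repeatedly alternating restriction to the ancestors of `B` and to
the districts meeting `B`.  (After `Fintype.card α` rounds the iteration has
stabilised.) -/
def intrinsicClosure [Fintype α] (G : CADMG α) (B : Set α) : Set α :=
  ((closureStep B)^[Fintype.card α] G).V

/-- `Φ_G(C)`: the `≺`-maximal recursive heads of `G` contained in `C`. -/
def Phi (G : CADMG α) (C : Set α) : Set (Set α) :=
  {H | H ∈ G.heads ∧ H ⊆ C ∧ ∀ H' ∈ G.heads, H' ⊆ C → H' ≠ H → ¬ G.headLT H H'}

/-- `ψ_G(C) = C \ ⋃ Φ_G(C)`. -/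
def psi (G : CADMG α) (C : Set α) : Set α := C \ ⋃₀ G.Phi C

/-- The recursive-head partition `⟨C⟩_G`, defined by `⟨∅⟩ = ∅` and
`⟨C⟩ = Φ(C) ∪ ⟨ψ(C)⟩`.  (The guard on cardinalities is automatically satisfied
whenever the recursion is used, since `ψ_G(C) ⊊ C` for nonempty `C`.) -/
def partn (G : CADMG α) (C : Set α) : Set (Set α) :=
  if C = ∅ then ∅
  else if h : (G.psi C).ncard < C.ncard then G.Phi C ∪ G.partn (G.psi C)
  else G.Phi C
termination_by C.ncard
decreasing_by exact h

/-- A kernel `p_{V|W}`, written as a function of a full assignment of binary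
values to all vertices: it takes values in `[0,1]`, depends only on the
coordinates in `V ∪ W`, and for every assignment to `W` (and the remaining
coordinates) the values summed over assignments to `V` equal `1`. -/
def IsKernel [Fintype α] (V W : Set α) (p : (α → Bool) → ℝ) : Prop :=
  (∀ x, 0 ≤ p x ∧ p x ≤ 1) ∧
  (∀ x y : α → Bool, (∀ v ∈ V ∪ W, x v = y v) → p x = p y) ∧
  (∀ x : α → Bool, ∑ g : α → Bool,
      (if ∀ v, v ∉ V → g v = x v then p g else 0) = 1)

/-- Sum a function of assignments over all values of the coordinates in `D`
(the marginal summing out the variables in `D`). -/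
def marginOut [Fintype α] (D : Set α) (p : (α → Bool) → ℝ) (x : α → Bool) : ℝ :=
  ∑ g : α → Bool, if ∀ v, v ∉ D → g v = x v then p g else 0

/-- `q` is a version of the conditional kernel of `A` given `B` and `W`, derived
from the kernel `p = p_{V|W}`. -/
def IsCondVersion [Fintype α] (V W A B : Set α)
    (p q : (α → Bool) → ℝ) : Prop :=
  IsKernel A (B ∪ W) q ∧
  ∀ x : α → Bool, q x * marginOut (V \ B) p x = marginOut (V \ (A ∪ B)) p x

/-- Recursive factorization of a kernel `p` according to a CADMG `G`
(the nested Markov property): either `|V| = 1`, or (i) `p` factorizes into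
kernels indexed by the districts of `G`, each of which (when there are at least
two districts) recursively factorizes according to the induced graph, and
(ii) for every ancestral set `A` with `V \ A ≠ ∅` the margin over `A` does not
depend on the fixed coordinates outside `A` and recursively factorizes
according to `G[V ∩ A]`. -/
inductive RF [Fintype α] : CADMG α → ((α → Bool) → ℝ) → Prop where
  | base (G : CADMG α) (p : (α → Bool) → ℝ) (h : G.V.ncard = 1) : RF G p
  | factor (G : CADMG α) (p : (α → Bool) → ℝ)
      (Ds : Finset (Set α)) (r : Set α → (α → Bool) → ℝ)
      (hDs : ∀ D, G.IsDistrict D ↔ D ∈ Ds)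
      (hker : ∀ D ∈ Ds, IsKernel D (G.paSet D \ D) (r D))
      (hfact : ∀ x, p x = ∏ D ∈ Ds, r D x)
      (hrec : 2 ≤ Ds.card → ∀ D ∈ Ds, RF (G.induce D) (r D))
      (hmarg_nodep : ∀ A : Set α, G.Ancestral A → (G.V \ A).Nonempty →
        ∀ x y : α → Bool, (∀ v ∈ (G.V ∩ A) ∪ (G.W ∩ A), x v = y v) →
          marginOut (G.V \ A) p x = marginOut (G.V \ A) p y)
      (hmarg_rf : ∀ A : Set α, G.Ancestral A → (G.V \ A).Nonempty →
        RF (G.induce (G.V ∩ A)) (marginOut (G.V \ A) p)) :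
      RF G p

/-- The alternating sum `Σ_{O ⊆ C ⊆ U} (−1)^{|C\O|} ∏_{H ∈ ⟨C⟩_G} q_H(x_T)`. -/
def altSum (G : CADMG α) (q : Set α → (α → Bool) → ℝ) (x : α → Bool)
    (O U : Set α) : ℝ :=
  ∑ᶠ C ∈ {C : Set α | O ⊆ C ∧ C ⊆ U},
    (-1 : ℝ) ^ (C \ O).ncard * ∏ᶠ H ∈ G.partn C, q H x

/-- A kernel `p` is parameterized according to `G`: there are parameters
`q_H(x_T)` (one real number for each recursive head `H` and each value `x_T` of
its tail `T`) with
`p(x_V | x_W) = Σ_{O ⊆ C ⊆ V} (−1)^{|C\O|} ∏_{H ∈ ⟨C⟩_G} q_H(x_T)`,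
where `O = {v ∈ V : x_v = 0}`. -/
def Parameterized [Fintype α] (G : CADMG α) (p : (α → Bool) → ℝ) : Prop :=
  ∃ q : Set α → (α → Bool) → ℝ,
    (∀ H ∈ G.heads, ∀ x y : α → Bool,
        (∀ v ∈ G.tail H, x v = y v) → q H x = q H y) ∧
    ∀ x : α → Bool,
      p x = G.altSum q x {v | v ∈ G.V ∧ x v = false} G.V

end CADMG

/-! Each reachability step replaces a graph `G₂` by some restriction `G₂[S]`, whatever the
kind of step. Restrictions compose, `G[C][S] = G[S ∩ C]`, and `G[V] = G` because every fixed
vertex is the parent of a random one; so by induction every reachable `G'` equals `G[V']`. -/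

namespace CADMG

variable {α : Type}

attribute [ext] CADMG

@[simp] theorem induce_V (G : CADMG α) (C : Set α) : (G.induce C).V = C ∩ G.V := rfl

@[simp] theorem induce_W (G : CADMG α) (C : Set α) :
    (G.induce C).W = G.paSet (C ∩ G.V) \ (C ∩ G.V) := rfl

@[simp] theorem induce_dir (G : CADMG α) (C : Set α) :
    (G.induce C).dir = {e | e ∈ G.dir ∧ e.2 ∈ C ∩ G.V} := rfl

@[simp] theorem induce_bi (G : CADMG α) (C : Set α) :
    (G.induce C).bi = {e | e ∈ G.bi ∧ e.1 ∈ C ∩ G.V ∧ e.2 ∈ C ∩ G.V} := rfl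

theorem paSet_induce_of_subset (G : CADMG α) {C S : Set α} (hS : S ⊆ C ∩ G.V) :
    (G.induce C).paSet S = G.paSet S := by
  ext a
  exact exists_congr fun b => and_congr_right fun hb => and_iff_left (hS hb)

theorem induce_induce (G : CADMG α) (C S : Set α) :
    (G.induce C).induce S = G.induce (S ∩ C) := by
  have hV : S ∩ (C ∩ G.V) = S ∩ C ∩ G.V := (Set.inter_assoc S C G.V).symm
  ext e
  · rw [induce_V, induce_V, induce_V, hV]
  · rw [induce_W, induce_W, induce_V, hV,
      paSet_induce_of_subset G (Set.inter_subset_inter_left G.V Set.inter_subset_right)]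
  · simp only [induce_dir, induce_V, Set.mem_inter_iff, Set.mem_ofPred_eq]
    tauto
  · simp only [induce_bi, induce_V, Set.mem_inter_iff, Set.mem_ofPred_eq]
    tauto

theorem paSet_V_diff_V (G : CADMG α) : G.paSet G.V \ G.V = G.W := by
  ext a
  constructor
  · rintro ⟨⟨b, -, hab⟩, haV⟩
    exact (G.dir_mem _ hab).1.resolve_left haV
  · intro ha
    obtain ⟨v, hv⟩ := G.fixed_child a ha
    exact ⟨⟨v, (G.dir_mem _ hv).2, hv⟩, G.disjointVW.notMem_of_mem_right ha⟩

theorem induce_V_self (G : CADMG α) : G.induce G.V = G := by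
  ext e
  · rw [induce_V, Set.inter_self]
  · rw [induce_W, Set.inter_self, paSet_V_diff_V]
  · simp only [induce_dir, Set.inter_self, Set.mem_ofPred_eq]
    exact and_iff_left_of_imp fun he => (G.dir_mem e he).2
  · simp only [induce_bi, Set.inter_self, Set.mem_ofPred_eq]
    exact and_iff_left_of_imp fun he => G.bi_mem e he

theorem eq_induce_of_reach {G G' : CADMG α} (h : Reach G G') : G' = G.induce G'.V := by
  induction h with
  | refl => exact G.induce_V_self.symm
  | @district G₂ S _ _ ih | @margin G₂ S _ _ ih =>
      calc G₂.induce S = (G.induce G₂.V).induce S := by rw [← ih]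
        _ = G.induce (S ∩ G₂.V) := induce_induce G _ S

end CADMG

/-- **Lemma 1 (well-definedness of reachable graphs).**  If a CADMG `G'` is
reachable from `G` and has random vertex set `C`, then `G' = G[C]`: its fixed
vertices are `pa_G(C) \ C`, its directed edges are exactly the directed edges
of `G` pointing to a vertex of `C`, and its bidirected edges are exactly the
bidirected edges of `G` with both endpoints in `C`. -/
theorem reachable_graph_eq_induced {α : Type} (G G' : CADMG α) (C : Set α)
    (hreach : CADMG.Reach G G') (hC : G'.V = C) :
    G'.W = G.paSet C \ C ∧
    G'.dir = {e | e ∈ G.dir ∧ e.2 ∈ C} ∧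
    G'.bi = {e | e ∈ G.bi ∧ e.1 ∈ C ∧ e.2 ∈ C} := by
  have hG' : G' = G.induce C := hC ▸ CADMG.eq_induce_of_reach hreach
  have hCV : C ∩ G.V = C := by rw [← CADMG.induce_V, ← hG', hC]
  subst hG'
  simp only [CADMG.induce_W, CADMG.induce_dir, CADMG.induce_bi, hCV, and_self]
end
end

section
/- Let G be a CADMG with binary state spaces whose random vertex set is the disjoint union V = D₁ ∪̇ ⋯ ∪̇ D_l of sets such that for i ≠ j there is no bidirected edge of G from a vertex in D_i to a vertex in D_j. Then for any assignment of real numbers q_H(x_T) (for H ∈ H(G) with tail T = T(H) and x_T ∈ 𝔛_T), any x_{V∪W} ∈ 𝔛_{V∪W}, O = {v ∈ V : x_v = 0}, and O_i = O ∩ D_i: Σ_{C : O ⊆ C ⊆ V} (−1)^{|C\O|} ∏_{H∈⟨C⟩_G} q_H(x_T) = ∏_{i=1}^l Σ_{C : O_i ⊆ C ⊆ D_i} (−1)^{|C\O_i|} ∏_{H∈⟨C⟩_G} q_H(x_T). -/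
open Classical

noncomputable section

/-
Heads are nonempty (by acyclicity) and their intrinsic sets are bidirected-connected, so each
lies inside a single piece `D i`, and heads in different pieces are `≺`-incomparable. Hence `Φ`,
`ψ` and, by induction along `ψ`, the recursive-head partition commute with intersecting by the
pieces: `⟨C⟩ = ⋃ᵢ ⟨C ∩ Dᵢ⟩`, a disjoint union. The summand of the alternating sum therefore
factors over the pieces, and `C ↦ (C ∩ Dᵢ)ᵢ` identifies `{O ⊆ C ⊆ V}` with
`∏ᵢ {O ∩ Dᵢ ⊆ C ⊆ Dᵢ}`, so the sum of products is the product of sums.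
-/

theorem finsum_mem_univ_pi {ι : Type*} [Fintype ι] {κ : ι → Type*} {R : Type*} [CommSemiring R]
    {t : ∀ i, Set (κ i)} (ht : ∀ i, (t i).Finite) (f : ∀ i, κ i → R) :
    ∑ᶠ c ∈ Set.univ.pi t, ∏ i, f i (c i) = ∏ i, ∑ᶠ a ∈ t i, f i a := by
  have hpi : Set.univ.pi t = ↑(Fintype.piFinset fun i => (ht i).toFinset) := by simp
  rw [hpi, finsum_mem_coe_finset, ← Finset.prod_univ_sum]
  exact Finset.prod_congr rfl fun i _ => (finsum_mem_eq_finite_toFinset_sum _ (ht i)).symm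

section Partition

variable {α ι : Type*} {D : ι → Set α}

theorem Pairwise.eq_of_mem_of_mem (hD : Pairwise (Function.onFun Disjoint D)) {i j : ι} {v : α}
    (hi : v ∈ D i) (hj : v ∈ D j) : i = j :=
  by_contra fun hij => Set.disjoint_left.mp (hD hij) hi hj

theorem Set.bijOn_inter_Icc (hD : Pairwise (Function.onFun Disjoint D)) {O U : Set α} (hO : O ⊆ U)
    (hU : U = ⋃ i, D i) :
    Set.BijOn (fun C i => C ∩ D i) (Set.Icc O U)
      (Set.univ.pi fun i => Set.Icc (O ∩ D i) (D i)) := by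
  refine Set.InvOn.bijOn (f' := fun c => ⋃ i, c i) ⟨fun C hC => ?_, fun c hc => ?_⟩
    (fun C hC i _ => ⟨Set.inter_subset_inter_left _ hC.1, Set.inter_subset_right⟩)
    (fun c hc => ⟨?_, ?_⟩)
  · simp only [← Set.inter_iUnion, ← hU]
    exact Set.inter_eq_left.mpr hC.2
  · have hc : ∀ j, c j ⊆ D j := fun j => (hc j trivial).2
    funext i
    ext v
    refine ⟨fun ⟨hv, hvi⟩ => ?_, fun hv => ⟨Set.mem_iUnion_of_mem i hv, hc i hv⟩⟩
    obtain ⟨j, hvj⟩ := Set.mem_iUnion.mp hv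
    obtain rfl : j = i := hD.eq_of_mem_of_mem (hc j hvj) hvi
    exact hvj
  · intro v hv
    have hvD : v ∈ ⋃ i, D i := hU ▸ hO hv
    obtain ⟨i, hvi⟩ := Set.mem_iUnion.mp hvD
    exact Set.mem_iUnion_of_mem i ((hc i trivial).1 ⟨hv, hvi⟩)
  · exact hU ▸ Set.iUnion_mono fun i => (hc i trivial).2

theorem finsum_mem_Icc_prod_inter [Finite α] [Fintype ι] {R : Type*} [CommSemiring R]
    (hD : Pairwise (Function.onFun Disjoint D)) {O U : Set α} (hO : O ⊆ U) (hU : U = ⋃ i, D i)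
    (f : ι → Set α → R) :
    ∑ᶠ C ∈ Set.Icc O U, ∏ i, f i (C ∩ D i) = ∏ i, ∑ᶠ C ∈ Set.Icc (O ∩ D i) (D i), f i C := by
  rw [finsum_mem_eq_of_bijOn _ (Set.bijOn_inter_Icc hD hO hU) (g := fun c => ∏ i, f i (c i))
    fun _ _ => rfl]
  exact finsum_mem_univ_pi (fun _ => Set.toFinite _) f

theorem Set.ncard_eq_sum_ncard_inter [Finite α] [Fintype ι]
    (hD : Pairwise (Function.onFun Disjoint D)) {A : Set α} (hA : A ⊆ ⋃ i, D i) :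
    A.ncard = ∑ i, (A ∩ D i).ncard := by
  conv_lhs => rw [← Set.inter_eq_left.mpr hA, Set.inter_iUnion]
  rw [Set.ncard_iUnion_of_finite (fun _ => Set.toFinite _)
    (fun i j hij => (hD hij).mono Set.inter_subset_right Set.inter_subset_right),
    finsum_eq_sum_of_fintype]

end Partition

namespace CADMG

variable {α : Type} {G : CADMG α}

theorem not_transGen_dir_self (G : CADMG α) (a : α) :
    ¬ Relation.TransGen (fun x y => (x, y) ∈ G.dir) a a := by
  intro h
  obtain ⟨b, hab, hba⟩ := Relation.TransGen.head'_iff.mp h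
  exact G.dir_irrefl _ hab (G.acyclic a b (.single hab) hba)

theorem sterile_nonempty [Finite α] (G : CADMG α) {S : Set α} (hS : S.Nonempty) :
    (G.sterile S).Nonempty := by
  let desc : α → α → Prop := fun b a => Relation.TransGen (fun x y => (x, y) ∈ G.dir) a b
  have : IsTrans α desc := ⟨fun _ _ _ h₁ h₂ => h₂.trans h₁⟩
  have : Std.Irrefl desc := ⟨G.not_transGen_dir_self⟩
  -- a vertex of `S` with no strict descendant in `S` is sterile
  obtain ⟨s, hs, hmin⟩ := (Finite.wellFounded_of_trans_of_irrefl desc).has_min S hS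
  exact ⟨s, hs, fun ⟨b, hb, hsb⟩ => hmin b hb (.single hsb)⟩

theorem nonempty_of_mem_heads [Finite α] {H : Set α} (hH : H ∈ G.heads) : H.Nonempty := by
  obtain ⟨S, hS, rfl⟩ := hH
  exact G.sterile_nonempty hS.1

theorem subset_intrinsicOf_of_mem_heads {H : Set α} (hH : H ∈ G.heads) :
    H ⊆ G.intrinsicOf H := by
  obtain ⟨S, hS, rfl⟩ := hH
  exact fun v hv => ⟨S, ⟨hS, rfl⟩, hv.1⟩

theorem intrinsicOf_subset_V (H : Set α) : G.intrinsicOf H ⊆ G.V :=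
  Set.sUnion_subset fun _ hS => hS.1.2.1.1

theorem BiConn.subset_of_bi_closed {B P : Set α} (hB : G.BiConn B)
    (hP : ∀ e ∈ G.bi, e.1 ∈ P → e.2 ∈ P) {v : α} (hvB : v ∈ B) (hvP : v ∈ P) : B ⊆ P := by
  intro a haB
  induction hB.2 v hvB a haB with
  | refl => exact hvP
  | tail _ hstep ih => exact hP _ hstep.1 (ih hstep.2.1)

theorem intrinsicOf_subset_of_bi_closed {H P : Set α} (hP : ∀ e ∈ G.bi, e.1 ∈ P → e.2 ∈ P)
    {v : α} (hvH : v ∈ H) (hvP : v ∈ P) : G.intrinsicOf H ⊆ P := by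
  refine Set.sUnion_subset fun S ⟨hS, hSH⟩ => hS.2.1.subset_of_bi_closed hP ?_ hvP
  exact (hSH ▸ hvH : v ∈ G.sterile S).1

theorem sUnion_Phi_subset (G : CADMG α) (C : Set α) : ⋃₀ G.Phi C ⊆ C :=
  Set.sUnion_subset fun _ hH => hH.2.1

theorem Phi_eq_empty_of_psi_eq [Finite α] {C : Set α} (h : G.psi C = C) : G.Phi C = ∅ := by
  refine Set.eq_empty_of_forall_notMem fun H hH => ?_
  obtain ⟨v, hv⟩ := nonempty_of_mem_heads hH.1
  have hvψ : v ∈ G.psi C := h.symm ▸ hH.2.1 hv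
  exact hvψ.2 ⟨H, hH, hv⟩

theorem partn_eq_empty_of_psi_eq [Finite α] {C : Set α} (h : G.psi C = C) : G.partn C = ∅ := by
  rw [partn]
  split_ifs with _ hlt
  · rfl
  · exact absurd hlt (by rw [h]; exact lt_irrefl _)
  · exact Phi_eq_empty_of_psi_eq h

theorem psi_lt_of_ne {C : Set α} (h : G.psi C ≠ C) : G.psi C < C :=
  lt_of_le_of_ne Set.sdiff_subset h

theorem partn_eq [Finite α] (G : CADMG α) (C : Set α) :
    G.partn C = G.Phi C ∪ G.partn (G.psi C) := by
  by_cases h : G.psi C = C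
  · rw [Phi_eq_empty_of_psi_eq h, h, Set.empty_union]
  · have hC : C ≠ ∅ := by
      rintro rfl
      exact h (Set.subset_empty_iff.mp Set.sdiff_subset)
    rw [partn, if_neg hC, dif_pos (Set.ncard_lt_ncard (psi_lt_of_ne h) (Set.toFinite C))]

theorem mem_heads_of_mem_partn [Finite α] {C H : Set α} (hH : H ∈ G.partn C) :
    H ∈ G.heads ∧ H ⊆ C := by
  induction C using WellFoundedLT.induction with
  | ind C ih =>
    by_cases h : G.psi C = C
    · rw [partn_eq_empty_of_psi_eq h] at hH
      exact absurd hH (Set.notMem_empty H)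
    rw [partn_eq] at hH
    rcases hH with hΦ | hψ
    · exact ⟨hΦ.1, hΦ.2.1⟩
    · obtain ⟨hH, hHψ⟩ := ih _ (psi_lt_of_ne h) hψ
      exact ⟨hH, hHψ.trans Set.sdiff_subset⟩

section Pieces

variable {ι : Type*} {D : ι → Set α}

theorem exists_intrinsicOf_subset [Finite α] (hV : G.V ⊆ ⋃ i, D i)
    (hsep : ∀ i, ∀ e ∈ G.bi, e.1 ∈ D i → e.2 ∈ D i) {H : Set α} (hH : H ∈ G.heads) :
    ∃ i, G.intrinsicOf H ⊆ D i := by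
  obtain ⟨v, hv⟩ := nonempty_of_mem_heads hH
  obtain ⟨i, hvi⟩ :=
    Set.mem_iUnion.mp (hV (intrinsicOf_subset_V H (subset_intrinsicOf_of_mem_heads hH hv)))
  exact ⟨i, intrinsicOf_subset_of_bi_closed (hsep i) hv hvi⟩

/-- Each piece is a union of districts. -/
structure BiClosedPartition (G : CADMG α) (D : ι → Set α) : Prop where
  subset_iUnion : G.V ⊆ ⋃ i, D i
  pairwise_disjoint : Pairwise (Function.onFun Disjoint D)
  bi_closed : ∀ i, ∀ e ∈ G.bi, e.1 ∈ D i → e.2 ∈ D i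

theorem BiClosedPartition.of_no_bi_between (hV : G.V = ⋃ i, D i)
    (hdisj : Pairwise (Function.onFun Disjoint D))
    (hbi : ∀ e ∈ G.bi, ∀ i j : ι, i ≠ j → ¬ (e.1 ∈ D i ∧ e.2 ∈ D j)) :
    G.BiClosedPartition D where
  subset_iUnion := hV.subset
  pairwise_disjoint := hdisj
  bi_closed i e he he₁ := by
    obtain ⟨j, hj⟩ := Set.mem_iUnion.mp (hV ▸ (G.bi_mem e he).2)
    obtain rfl : j = i := by_contra fun hji => hbi e he i j (Ne.symm hji) ⟨he₁, hj⟩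
    exact hj

variable [Finite α]

theorem BiClosedPartition.mem_Phi_inter_iff (hD : G.BiClosedPartition D) {C H : Set α} {i : ι}
    (hHi : H ⊆ D i) :
    H ∈ G.Phi (C ∩ D i) ↔ H ∈ G.Phi C := by
  constructor
  · rintro ⟨hH, hHC, hmax⟩
    refine ⟨hH, hHC.trans Set.inter_subset_left, fun H' hH' hH'C hne hlt => ?_⟩
    obtain ⟨j, hj⟩ := exists_intrinsicOf_subset hD.subset_iUnion hD.bi_closed hH'
    obtain ⟨v, hv⟩ := nonempty_of_mem_heads hH
    have hvj : v ∈ D j := hj (hlt.subset (subset_intrinsicOf_of_mem_heads hH hv))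
    obtain rfl : j = i := hD.pairwise_disjoint.eq_of_mem_of_mem hvj (hHi hv)
    exact hmax H' hH' (Set.subset_inter hH'C ((subset_intrinsicOf_of_mem_heads hH').trans hj))
      hne hlt
  · rintro ⟨hH, hHC, hmax⟩
    exact ⟨hH, Set.subset_inter hHC hHi,
      fun H' hH' hH'C => hmax H' hH' (hH'C.trans Set.inter_subset_left)⟩

theorem BiClosedPartition.Phi_eq_iUnion (hD : G.BiClosedPartition D) (C : Set α) :
    G.Phi C = ⋃ i, G.Phi (C ∩ D i) := by
  ext H
  rw [Set.mem_iUnion]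
  refine ⟨fun hH => ?_,
    fun ⟨i, hH⟩ => (hD.mem_Phi_inter_iff (hH.2.1.trans Set.inter_subset_right)).mp hH⟩
  obtain ⟨i, hi⟩ := exists_intrinsicOf_subset hD.subset_iUnion hD.bi_closed hH.1
  exact ⟨i, (hD.mem_Phi_inter_iff ((subset_intrinsicOf_of_mem_heads hH.1).trans hi)).mpr hH⟩

theorem BiClosedPartition.sUnion_Phi_inter (hD : G.BiClosedPartition D) (C : Set α) (i : ι) :
    ⋃₀ G.Phi C ∩ D i = ⋃₀ G.Phi (C ∩ D i) := by
  ext v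
  rw [hD.Phi_eq_iUnion, Set.sUnion_iUnion, Set.mem_inter_iff, Set.mem_iUnion]
  refine ⟨fun ⟨⟨j, hvj⟩, hvi⟩ => ?_, fun hv => ⟨⟨i, hv⟩, ?_⟩⟩
  · have hvD : v ∈ D j := (G.sUnion_Phi_subset _ hvj).2
    obtain rfl : j = i := hD.pairwise_disjoint.eq_of_mem_of_mem hvD hvi
    exact hvj
  · exact (G.sUnion_Phi_subset _ hv).2

theorem BiClosedPartition.psi_inter (hD : G.BiClosedPartition D) (C : Set α) (i : ι) :
    G.psi (C ∩ D i) = G.psi C ∩ D i := by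
  rw [psi, psi, Set.inter_sdiff_distrib_right, hD.sUnion_Phi_inter]

theorem BiClosedPartition.partn_eq_iUnion (hD : G.BiClosedPartition D) (C : Set α) :
    G.partn C = ⋃ i, G.partn (C ∩ D i) := by
  induction C using WellFoundedLT.induction with
  | ind C ih =>
    by_cases h : G.psi C = C
    · rw [partn_eq_empty_of_psi_eq h, eq_comm, Set.iUnion_eq_empty]
      exact fun i => partn_eq_empty_of_psi_eq (by rw [hD.psi_inter, h])
    rw [partn_eq, hD.Phi_eq_iUnion, ih _ (psi_lt_of_ne h), ← Set.iUnion_union_distrib]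
    simp only [← hD.psi_inter, ← partn_eq]

theorem BiClosedPartition.finprod_mem_partn [Fintype ι] {M : Type*} [CommMonoid M]
    (hD : G.BiClosedPartition D) (f : Set α → M) (C : Set α) :
    ∏ᶠ H ∈ G.partn C, f H = ∏ i, ∏ᶠ H ∈ G.partn (C ∩ D i), f H := by
  have hdisj : Pairwise (Function.onFun Disjoint fun i => G.partn (C ∩ D i)) := by
    refine fun i j hij => Set.disjoint_left.mpr fun H hHi hHj => ?_
    obtain ⟨hH, hHCi⟩ := mem_heads_of_mem_partn hHi
    obtain ⟨v, hv⟩ := nonempty_of_mem_heads hH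
    exact Set.disjoint_left.mp (hD.pairwise_disjoint hij) (hHCi hv).2
      ((mem_heads_of_mem_partn hHj).2 hv).2
  rw [hD.partn_eq_iUnion, finprod_mem_iUnion hdisj fun _ => Set.toFinite _,
    finprod_eq_prod_of_fintype]

end Pieces

end CADMG

theorem altSum_prod_of_disconnected_general {α : Type} [Fintype α] (G : CADMG α)
    (l : ℕ) (D : Fin l → Set α)
    (hV : G.V = ⋃ i, D i) (hdisj : Pairwise (Function.onFun Disjoint D))
    (hbi : ∀ e ∈ G.bi, ∀ i j : Fin l, i ≠ j → ¬ (e.1 ∈ D i ∧ e.2 ∈ D j))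
    (q : Set α → (α → Bool) → ℝ)
    (x : α → Bool) :
    G.altSum q x {v | v ∈ G.V ∧ x v = false} G.V =
      ∏ i : Fin l,
        G.altSum q x ({v | v ∈ G.V ∧ x v = false} ∩ D i) (D i) := by
  set O : Set α := {v | v ∈ G.V ∧ x v = false}
  have hD := CADMG.BiClosedPartition.of_no_bi_between hV hdisj hbi
  have hsummand : ∀ C ∈ Set.Icc O G.V,
      (-1 : ℝ) ^ (C \ O).ncard * ∏ᶠ H ∈ G.partn C, q H x =
        ∏ i, ((-1 : ℝ) ^ ((C ∩ D i) \ (O ∩ D i)).ncard * ∏ᶠ H ∈ G.partn (C ∩ D i), q H x) := by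
    intro C hC
    have hCO : C \ O ⊆ ⋃ i, D i := hV ▸ Set.sdiff_subset.trans hC.2
    simp only [Finset.prod_mul_distrib, ← Set.inter_sdiff_distrib_right, Finset.prod_pow_eq_pow_sum,
      ← Set.ncard_eq_sum_ncard_inter hdisj hCO, ← hD.finprod_mem_partn]
  have hO : O ⊆ G.V := fun _ hv => hv.1
  exact (finsum_mem_congr rfl hsummand).trans (finsum_mem_Icc_prod_inter hdisj hO hV
    fun i C => (-1 : ℝ) ^ (C \ (O ∩ D i)).ncard * ∏ᶠ H ∈ G.partn C, q H x)

/-- **Lemma 8 (the alternating sum factorizes over districts).**  Let `G` be a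
CADMG with binary state spaces whose random vertex set is the disjoint union
`V = D 1 ∪̇ ⋯ ∪̇ D l` of sets with no bidirected edge of `G` between distinct
pieces.  Then for any parameters `q_H(x_T)` (functions of the tail
coordinates only), any assignment `x`, `O = {v ∈ V : x v = 0}` and
`O_i = O ∩ D i`:
`Σ_{O ⊆ C ⊆ V} (−1)^{|C\O|} ∏_{H ∈ ⟨C⟩_G} q_H(x_T)
  = ∏_i Σ_{O_i ⊆ C ⊆ D i} (−1)^{|C\O_i|} ∏_{H ∈ ⟨C⟩_G} q_H(x_T)`. -/
theorem altSum_prod_of_disconnected {α : Type} [Fintype α] (G : CADMG α)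
    (l : ℕ) (D : Fin l → Set α)
    (hV : G.V = ⋃ i, D i) (hdisj : Pairwise (Function.onFun Disjoint D))
    (hbi : ∀ e ∈ G.bi, ∀ i j : Fin l, i ≠ j → ¬ (e.1 ∈ D i ∧ e.2 ∈ D j))
    (q : Set α → (α → Bool) → ℝ)
    (hq : ∀ H ∈ G.heads, ∀ x y : α → Bool,
        (∀ v ∈ G.tail H, x v = y v) → q H x = q H y)
    (x : α → Bool) :
    G.altSum q x {v | v ∈ G.V ∧ x v = false} G.V =
      ∏ i : Fin l,
        G.altSum q x ({v | v ∈ G.V ∧ x v = false} ∩ D i) (D i) :=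
  altSum_prod_of_disconnected_general G l D hV hdisj hbi q x
end
end
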